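/- arXiv:1908.04514 — 2 statements merged into one kernel-verified Lean document; each statement's English description precedes it below -/
import Mathlib

section
/- The map r(γ,t,z) = (−t, γ, γ(t)·z) is a group homomorphism from the central extension Γ̂ × Γ ×_σ 𝕋 to the central extension Γ × Γ̂ ×_{σ'} 𝕋: for all (γ₁,t₁,z₁), (γ₂,t₂,z₂), r((γ₁,t₁,z₁)·(γ₂,t₂,z₂)) = r(γ₁,t₁,z₁)·r(γ₂,t₂,z₂). -/
open MeasureTheory Complex ComplexConjugate

noncomputable section

/-- A model of the Pontryagin duality pairing between `Δ = Γ̂` and `Γ`: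
elements of `Δ` act as continuous unitary characters of `Γ`, and the pairing is
additive-to-multiplicative in both variables. -/
structure DualPairing (Δ Γ : Type*) [AddCommGroup Δ] [AddCommGroup Γ]
    [TopologicalSpace Δ] [TopologicalSpace Γ] where
  pair : Δ → Γ → ℂ
  norm_one : ∀ δ t, ‖pair δ t‖ = 1
  add_left : ∀ δ₁ δ₂ t, pair (δ₁ + δ₂) t = pair δ₁ t * pair δ₂ t
  add_right : ∀ δ t₁ t₂, pair δ (t₁ + t₂) = pair δ t₁ * pair δ t₂
  continuous_pair : Continuous fun q : Δ × Γ => pair q.1 q.2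

variable {Δ Γ : Type*} [AddCommGroup Δ] [AddCommGroup Γ]
  [TopologicalSpace Δ] [TopologicalSpace Γ]

/-- The 2-cocycle `σ((γ₁,t₁),(γ₂,t₂)) = conj (γ₂ t₁)` on `G = Γ̂ × Γ`. -/
def sigmaCocycle (P : DualPairing Δ Γ) (g₁ g₂ : Δ × Γ) : ℂ :=
  conj (P.pair g₂.1 g₁.2)

/-- The Schrödinger representation `(π(γ,t)ξ)(s) = γ(s) · ξ(s − t)`. -/
def schrodinger (P : DualPairing Δ Γ) (g : Δ × Γ) (ξ : Γ → ℂ) : Γ → ℂ :=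
  fun s => P.pair g.1 s * ξ (s - g.2)

/-- The 2-cocycle `σ'((t₁,γ₁),(t₂,γ₂)) = conj (γ₁ t₂)` on `Ĝ = Γ × Γ̂`. -/
def sigmaCocycle' (P : DualPairing Δ Γ) (h₁ h₂ : Γ × Δ) : ℂ :=
  conj (P.pair h₁.2 h₂.1)

/-- Multiplication of the central extension `G ×_σ 𝕋`, `G = Γ̂ × Γ`:
`(g₁,z₁)·(g₂,z₂) = (g₁+g₂, σ(g₁,g₂)z₁z₂)`. -/
def extMul (P : DualPairing Δ Γ) (a b : Δ × Γ × ℂ) : Δ × Γ × ℂ :=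
  (a.1 + b.1, a.2.1 + b.2.1,
    sigmaCocycle P (a.1, a.2.1) (b.1, b.2.1) * (a.2.2 * b.2.2))

/-- Multiplication of the central extension `Ĝ ×_{σ'} 𝕋`, `Ĝ = Γ × Γ̂`:
`(h₁,w₁)·(h₂,w₂) = (h₁+h₂, σ'(h₁,h₂)w₁w₂)`. -/
def extMulHat (P : DualPairing Δ Γ) (a b : Γ × Δ × ℂ) : Γ × Δ × ℂ :=
  (a.1 + b.1, a.2.1 + b.2.1,
    sigmaCocycle' P (a.1, a.2.1) (b.1, b.2.1) * (a.2.2 * b.2.2))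

/-- The map `r(γ,t,z) = (−t, γ, γ(t)·z)`. -/
def rMap (P : DualPairing Δ Γ) (a : Δ × Γ × ℂ) : Γ × Δ × ℂ :=
  (-a.2.1, a.1, P.pair a.1 a.2.1 * a.2.2)

/-
Since `conj (γ t) = γ (-t)` for a unitary character, the cocycle `σ'(r a, r b) = γ₁(t₂)` differs
from `σ(a, b) = conj (γ₂(t₁))` by `γ₁(t₂) γ₂(t₁)`, the coboundary of `(γ, t) ↦ γ(t)`; this is exactly
the factor that `r` puts into the central coordinate.
-/

namespace DualPairing

variable (P : DualPairing Δ Γ) (δ : Δ) (t : Γ)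

lemma pair_mul_conj : P.pair δ t * conj (P.pair δ t) = 1 := by
  rw [mul_conj', P.norm_one, Complex.ofReal_one, one_pow]

lemma pair_zero_right : P.pair δ 0 = 1 := by
  have hne : P.pair δ 0 ≠ 0 := norm_ne_zero_iff.mp (by rw [P.norm_one]; exact one_ne_zero)
  have hidem : P.pair δ 0 * P.pair δ 0 = P.pair δ 0 := by rw [← P.add_right, add_zero]
  exact (mul_eq_right₀ hne).mp hidem

lemma conj_pair : conj (P.pair δ t) = P.pair δ (-t) := by
  calc conj (P.pair δ t) = conj (P.pair δ t) * P.pair δ (t + -t) := by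
        rw [add_neg_cancel, pair_zero_right, mul_one]
    _ = P.pair δ (-t) * (P.pair δ t * conj (P.pair δ t)) := by rw [P.add_right]; ring
    _ = P.pair δ (-t) := by rw [pair_mul_conj, mul_one]

end DualPairing

theorem rMap_is_hom_general (P : DualPairing Δ Γ) (a b : Δ × Γ × ℂ) :
    rMap P (extMul P a b) = extMulHat P (rMap P a) (rMap P b) := by
  obtain ⟨γ₁, t₁, z₁⟩ := a
  obtain ⟨γ₂, t₂, z₂⟩ := b
  simp only [rMap, extMul, extMulHat, sigmaCocycle, sigmaCocycle', Prod.mk.injEq]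
  refine ⟨neg_add _ _, trivial, ?_⟩
  rw [P.conj_pair γ₁, neg_neg, P.add_left, P.add_right, P.add_right]
  linear_combination (P.pair γ₁ t₁ * P.pair γ₁ t₂ * P.pair γ₂ t₂ * z₁ * z₂) *
    P.pair_mul_conj γ₂ t₁

/-- `r(γ,t,z) = (−t, γ, γ(t)z)` is a group homomorphism from `Γ̂ × Γ ×_σ 𝕋`
to `Γ × Γ̂ ×_{σ'} 𝕋`. -/
theorem rMap_is_hom (P : DualPairing Δ Γ) (a b : Δ × Γ × ℂ)
    (ha : ‖a.2.2‖ = 1) (hb : ‖b.2.2‖ = 1) :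
    rMap P (extMul P a b) = extMulHat P (rMap P a) (rMap P b) :=
  rMap_is_hom_general P a b
end
end

section
/- Twisted convolution of dual short-time Fourier transforms: let ξ₁, ξ₂, η₁, η₂ be Schwartz functions on ℝⁿ. Then for every g ∈ ℝⁿ×ℝⁿ, (V°_{η₂}ξ₂ ♮ V°_{η₁}ξ₁)(g) = ⟨ξ₁, η₂⟩ · V°_{η₁}ξ₂(g), where ⟨ξ₁, η₂⟩ is the L²(ℝⁿ) inner product. -/
open MeasureTheory Complex ComplexConjugate

noncomputable section

variable {n : ℕ}

/-- The Euclidean inner product on `ℝⁿ`. -/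
def dot {n : ℕ} (y s : Fin n → ℝ) : ℝ := ∑ i, y i * s i

/-- `e2pi r = e^{2πir}`. -/
def e2pi (r : ℝ) : ℂ := Complex.exp (2 * Real.pi * Complex.I * r)

/-- The Schrödinger representation `π(y,x)ξ(s) = e^{2πi⟨y,s⟩} ξ(s−x)`. -/
def schrod {n : ℕ} (y x : Fin n → ℝ) (ξ : (Fin n → ℝ) → ℂ) : (Fin n → ℝ) → ℂ :=
  fun s => e2pi (dot y s) * ξ (s - x)

/-- The dual Schrödinger representation `π°ι(y,x)ξ(s) = e^{−2πi⟨x,s−y⟩} ξ(s−y)`. -/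
def schrodDual {n : ℕ} (y x : Fin n → ℝ) (ξ : (Fin n → ℝ) → ℂ) : (Fin n → ℝ) → ℂ :=
  fun s => e2pi (-(dot x (s - y))) * ξ (s - y)

/-- The Fourier transform `𝓕f(y) = ∫ f(s) e^{−2πi⟨y,s⟩} ds`. -/
def fourierT {n : ℕ} (f : (Fin n → ℝ) → ℂ) : (Fin n → ℝ) → ℂ :=
  fun y => ∫ s, f s * e2pi (-(dot y s))

/-- The `L²` inner product `⟨f,g⟩ = ∫ f · conj g`, linear in the first argument. -/
def ip {n : ℕ} (f g : (Fin n → ℝ) → ℂ) : ℂ := ∫ s, f s * conj (g s)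

/-- The short-time Fourier transform `V_ηξ(y,x) = ⟨ξ, π(y,x)η⟩`. -/
def stft {n : ℕ} (η ξ : (Fin n → ℝ) → ℂ) (g : (Fin n → ℝ) × (Fin n → ℝ)) : ℂ :=
  ip ξ (schrod g.1 g.2 η)

/-- The dual short-time Fourier transform `V°_ηξ(y,x) = ⟨ξ, π°ι(y,x)η⟩`. -/
def stftDual {n : ℕ} (η ξ : (Fin n → ℝ) → ℂ) (g : (Fin n → ℝ) × (Fin n → ℝ)) : ℂ :=
  ip ξ (schrodDual g.1 g.2 η)

/-- The 2-cocycle `σ((y₁,x₁),(y₂,x₂)) = e^{−2πi⟨x₁,y₂⟩}` on `G = ℝⁿ × ℝⁿ`. -/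
def sigmaG {n : ℕ} (g₁ g₂ : (Fin n → ℝ) × (Fin n → ℝ)) : ℂ :=
  e2pi (-(dot g₁.2 g₂.1))

/-- The twisted convolution `(a ♮ b)(g) = ∫ a(g') b(g−g') σ(g', g−g') dg'`. -/
def twConv {n : ℕ} (a b : ((Fin n → ℝ) × (Fin n → ℝ)) → ℂ) :
    ((Fin n → ℝ) × (Fin n → ℝ)) → ℂ :=
  fun g => ∫ g', a g' * b (g - g') * sigmaG g' (g - g')

/-!
In the frequency variable, `x ↦ V°_η ξ (y, x)` is the inverse Fourier transform of the window
`u ↦ ξ (u + y) · conj (η u)`, while `x' ↦ V°_{η₁}ξ₁ (g - g') σ(g', g - g')` is the Fourier transform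
of a modulated product. Parseval therefore collapses the `x'`-integral of the twisted convolution
to an integral over `ℝⁿ`, and the substitution `v = t + y'` splits what is left into
`⟨ξ₁, η₂⟩ · V°_{η₁}ξ₂ (g)`. Fubini applies because `V°_η ξ` is integrable on `ℝⁿ × ℝⁿ`: it is
bounded by a correlation of `|ξ|` and `|η|`, which decays in `y`, and by the same correlation of
their Fourier transforms, which decays in `x`.

`Fin n → ℝ` carries the sup norm, so the analysis is carried out on a real inner product space,
where Fourier inversion is available, and transported through `EuclideanSpace ℝ (Fin n)`.
-/

open SchwartzMap FourierTransform
open scoped RealInnerProductSpace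

theorem fourierChar_eq_e2pi (r : ℝ) : (𝐞 r : ℂ) = e2pi r := by
  rw [Real.fourierChar_apply, e2pi]
  push_cast
  ring_nf

theorem e2pi_add (a b : ℝ) : e2pi (a + b) = e2pi a * e2pi b := by
  simp only [← fourierChar_eq_e2pi, AddChar.map_add_eq_mul, Circle.coe_mul]

theorem norm_e2pi (r : ℝ) : ‖e2pi r‖ = 1 := by
  rw [← fourierChar_eq_e2pi, Circle.norm_coe]

theorem conj_e2pi (r : ℝ) : conj (e2pi r) = e2pi (-r) := by
  rw [← fourierChar_eq_e2pi, ← fourierChar_eq_e2pi, ← Circle.coe_inv_eq_conj,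
    AddChar.map_neg_eq_inv]

@[fun_prop]
theorem continuous_e2pi : Continuous e2pi := by
  unfold e2pi
  fun_prop

theorem integral_integral_mul_comp_add {G 𝕜 : Type*} [AddGroup G] [MeasurableSpace G]
    [MeasurableAdd₂ G] [RCLike 𝕜] (μ : Measure G) [SFinite μ] [μ.IsAddLeftInvariant]
    {P Q : G → 𝕜} (hP : Integrable P μ) (hQ : Integrable Q μ) :
    ∫ y, ∫ t, P t * Q (t + y) ∂μ ∂μ = (∫ t, P t ∂μ) * ∫ v, Q v ∂μ := by
  have hint : Integrable (Function.uncurry fun y t => P t * Q (t + y)) (μ.prod μ) :=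
    (measurePreserving_prod_add_swap μ μ).integrable_comp_of_integrable (hP.mul_prod hQ)
  rw [integral_integral_swap hint, ← integral_mul_const]
  congr 1 with t
  rw [integral_const_mul, integral_add_left_eq_self]

theorem one_add_norm_le_mul {E : Type*} [SeminormedAddCommGroup E] (a t : E) :
    1 + ‖a‖ ≤ (1 + ‖t‖) * (1 + ‖t - a‖) := by
  nlinarith [norm_le_norm_add_norm_sub' a t, norm_nonneg t, norm_nonneg (t - a), norm_sub_rev a t]

theorem le_sqrt_mul_mul_of_le_mul_sq {v A B a b : ℝ} (hv : 0 ≤ v) (ha : 0 ≤ a) (hb : 0 ≤ b)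
    (hA : v ≤ A * a ^ 2) (hB : v ≤ B * b ^ 2) : v ≤ √(A * B) * (a * b) := by
  rw [← Real.sqrt_sq hv, ← Real.sqrt_sq (mul_nonneg ha hb), ← Real.sqrt_mul' _ (sq_nonneg _)]
  refine Real.sqrt_le_sqrt ?_
  calc v ^ 2 = v * v := sq v
    _ ≤ (A * a ^ 2) * (B * b ^ 2) := mul_le_mul hA hB hv (hv.trans hA)
    _ = A * B * (a * b) ^ 2 := by ring

section Decay

variable {V E F : Type*} [NormedAddCommGroup V] [NormedSpace ℝ V]
  [NormedAddCommGroup E] [NormedSpace ℝ E] [NormedAddCommGroup F] [NormedSpace ℝ F]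

theorem SchwartzMap.exists_norm_le_inv_one_add_norm_pow (f : 𝓢(V, E)) (k : ℕ) :
    ∃ C, 0 ≤ C ∧ ∀ x, ‖f x‖ ≤ C * ((1 + ‖x‖) ^ k)⁻¹ := by
  refine ⟨2 ^ k * (Finset.Iic (k, 0)).sup (fun m => SchwartzMap.seminorm ℝ m.1 m.2) f,
    by positivity, fun x => ?_⟩
  have h := f.one_add_le_sup_seminorm_apply (𝕜 := ℝ) (m := (k, 0)) le_rfl le_rfl x
  rw [norm_iteratedFDeriv_zero] at h
  rwa [← div_eq_mul_inv, le_div_iff₀' (by positivity)]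

variable [FiniteDimensional ℝ V] [MeasurableSpace V] [BorelSpace V]
  (μ : Measure V) [μ.IsAddHaarMeasure]

theorem integrable_inv_one_add_norm_pow :
    Integrable (fun t : V => ((1 + ‖t‖) ^ (Module.finrank ℝ V + 1))⁻¹) μ := by
  refine (integrable_one_add_norm (E := V) (μ := μ) (r := Module.finrank ℝ V + 1)
    (by linarith)).congr (ae_of_all _ fun t => ?_)
  simp only [Real.rpow_neg (by positivity : (0 : ℝ) ≤ 1 + ‖t‖)]
  norm_cast

theorem exists_integral_norm_mul_norm_comp_sub_le (f : 𝓢(V, E)) (h : 𝓢(V, F)) (k : ℕ) :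
    ∃ C, ∀ a : V, ∫ t, ‖f t‖ * ‖h (t - a)‖ ∂μ ≤ C * ((1 + ‖a‖) ^ k)⁻¹ := by
  set d := Module.finrank ℝ V + 1
  obtain ⟨Cf, hCf, hf⟩ := f.exists_norm_le_inv_one_add_norm_pow (k + d)
  obtain ⟨Ch, hCh, hh⟩ := h.exists_norm_le_inv_one_add_norm_pow k
  refine ⟨Cf * Ch * ∫ t : V, ((1 + ‖t‖) ^ d)⁻¹ ∂μ, fun a => ?_⟩
  have peetre : ∀ t : V, ((1 + ‖t‖) ^ (k + d))⁻¹ * ((1 + ‖t - a‖) ^ k)⁻¹ ≤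
      ((1 + ‖a‖) ^ k)⁻¹ * ((1 + ‖t‖) ^ d)⁻¹ := fun t => by
    rw [← mul_inv, ← mul_inv, pow_add, mul_right_comm, ← mul_pow]
    gcongr
    exact one_add_norm_le_mul a t
  calc ∫ t, ‖f t‖ * ‖h (t - a)‖ ∂μ
      ≤ ∫ t, Cf * Ch * ((1 + ‖a‖) ^ k)⁻¹ * ((1 + ‖t‖) ^ d)⁻¹ ∂μ := by
        refine integral_mono_of_nonneg (ae_of_all _ fun t => by positivity)
          ((integrable_inv_one_add_norm_pow μ).const_mul _) (ae_of_all _ fun t => ?_)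
        calc ‖f t‖ * ‖h (t - a)‖
            ≤ (Cf * ((1 + ‖t‖) ^ (k + d))⁻¹) * (Ch * ((1 + ‖t - a‖) ^ k)⁻¹) :=
              mul_le_mul (hf t) (hh _) (norm_nonneg _) (by positivity)
          _ ≤ Cf * Ch * (((1 + ‖a‖) ^ k)⁻¹ * ((1 + ‖t‖) ^ d)⁻¹) := by
              rw [mul_mul_mul_comm]
              exact mul_le_mul_of_nonneg_left (peetre t) (by positivity)
          _ = _ := by ring
    _ = Cf * Ch * (∫ t : V, ((1 + ‖t‖) ^ d)⁻¹ ∂μ) * ((1 + ‖a‖) ^ k)⁻¹ := by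
        rw [integral_const_mul]
        ring

end Decay

section Window

variable {V : Type*} [NormedAddCommGroup V] [NormedSpace ℝ V]

def stftDualWindow (η ξ : 𝓢(V, ℂ)) (y : V) : 𝓢(V, ℂ) :=
  pairing (ContinuousLinearMap.mul ℝ ℂ) (compSubConstCLM ℝ (-y) ξ)
    (postcompCLM (Complex.conjCLE : ℂ →L[ℝ] ℂ) η)

@[simp]
theorem stftDualWindow_apply (η ξ : 𝓢(V, ℂ)) (y u : V) :
    stftDualWindow η ξ y u = ξ (u + y) * conj (η u) := by
  simp [stftDualWindow, sub_neg_eq_add]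

end Window

section InnerProductSpace

variable {V : Type*} [NormedAddCommGroup V] [InnerProductSpace ℝ V] [FiniteDimensional ℝ V]
  [MeasurableSpace V] [BorelSpace V]

theorem fourier_apply_eq_integral_e2pi (f : V → ℂ) (w : V) :
    𝓕 f w = ∫ v, f v * e2pi (-⟪v, w⟫) := by
  simp only [Real.fourier_eq, Circle.smul_def, fourierChar_eq_e2pi, smul_eq_mul, mul_comm]

theorem fourierInv_apply_eq_integral_e2pi (f : V → ℂ) (w : V) :
    𝓕⁻ f w = ∫ v, f v * e2pi ⟪v, w⟫ := by
  simp only [Real.fourierInv_eq, Circle.smul_def, fourierChar_eq_e2pi, smul_eq_mul, mul_comm]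

theorem MeasureTheory.Integrable.integral_fourier_mul_eq {f g : V → ℂ} (hf : Integrable f)
    (hg : Integrable g) : ∫ w, 𝓕 f w * g w = ∫ v, f v * 𝓕 g v := by
  simpa using! VectorFourier.integral_fourierIntegral_smul_eq_flip
    (L := innerₗ V) Real.continuous_fourierChar continuous_inner hf hg

theorem SchwartzMap.integral_fourierInv_mul_fourier (F : 𝓢(V, ℂ)) {H : V → ℂ}
    (hH : Integrable H) : ∫ w, 𝓕⁻ F w * 𝓕 H w = ∫ v, F v * H v := by
  rw [← Integrable.integral_fourier_mul_eq (𝓕⁻ F).integrable hH, ← fourier_coe,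
    fourier_fourierInv_eq]

def stftDualInner (η ξ : V → ℂ) (y x : V) : ℂ :=
  ∫ s, ξ s * conj (η (s - y)) * e2pi ⟪x, s - y⟫

theorem stftDualInner_eq_fourierInv (η ξ : 𝓢(V, ℂ)) (y x : V) :
    stftDualInner η ξ y x = 𝓕⁻ (stftDualWindow η ξ y) x := by
  rw [fourierInv_coe, fourierInv_apply_eq_integral_e2pi, stftDualInner,
    ← integral_add_right_eq_self _ y]
  simp [real_inner_comm x]

theorem stftDualInner_sub_mul_e2pi_eq_fourier (η ξ : V → ℂ) (c x x' : V) :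
    stftDualInner η ξ c (x - x') * e2pi (-⟪x', c⟫) =
      𝓕 (fun t => ξ t * conj (η (t - c)) * e2pi ⟪x, t - c⟫) x' := by
  rw [fourier_apply_eq_integral_e2pi, stftDualInner, ← integral_mul_const]
  congr 1 with t
  have phase : ⟪x - x', t - c⟫ + -⟪x', c⟫ = ⟪x, t - c⟫ + -⟪t, x'⟫ := by
    simp only [inner_sub_left, inner_sub_right, real_inner_comm t x']
    ring
  rw [mul_assoc, ← e2pi_add, phase, e2pi_add]
  ring

theorem integrable_conj_comp_sub_mul_e2pi (η : 𝓢(V, ℂ)) (c x : V) :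
    Integrable fun s => conj (η (s - c)) * e2pi ⟪x, s - c⟫ := by
  refine ((Complex.conjCLE : ℂ →L[ℝ] ℂ).integrable_comp (η.integrable.comp_sub_right c)).mul_bdd
    (by fun_prop) (c := 1) (ae_of_all _ fun s => ?_)
  simp [norm_e2pi]

theorem integrable_mul_conj_comp_sub_mul_e2pi (η ξ : 𝓢(V, ℂ)) (c x : V) :
    Integrable fun s => ξ s * conj (η (s - c)) * e2pi ⟪x, s - c⟫ := by
  simpa only [mul_assoc] using (integrable_conj_comp_sub_mul_e2pi η c x).bdd_mul
    (by fun_prop) (c := SchwartzMap.seminorm ℝ 0 0 ξ) (ae_of_all _ (ξ.norm_le_seminorm ℝ))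

theorem integral_stftDualInner_mul_stftDualInner_sub (ξ₁ ξ₂ η₁ η₂ : 𝓢(V, ℂ)) (c x y' : V) :
    ∫ x', stftDualInner η₂ ξ₂ y' x' * (stftDualInner η₁ ξ₁ c (x - x') * e2pi (-⟪x', c⟫)) =
      ∫ t, ξ₂ (t + y') * conj (η₂ t) * (ξ₁ t * conj (η₁ (t - c)) * e2pi ⟪x, t - c⟫) := by
  simp_rw [stftDualInner_eq_fourierInv η₂ ξ₂, stftDualInner_sub_mul_e2pi_eq_fourier]
  rw [integral_fourierInv_mul_fourier _ (integrable_mul_conj_comp_sub_mul_e2pi η₁ ξ₁ c x)]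
  simp

theorem fourier_conj_comp_sub_mul_e2pi (η : V → ℂ) (y x w : V) :
    𝓕 (fun s => conj (η (s - y)) * e2pi ⟪x, s - y⟫) w =
      e2pi (-⟪y, w⟫) * conj (𝓕⁻ η (w - x)) := by
  rw [fourier_apply_eq_integral_e2pi, fourierInv_apply_eq_integral_e2pi, ← integral_conj,
    ← integral_const_mul, ← integral_add_right_eq_self _ y]
  congr 1 with u
  have phase : ⟪x, u⟫ + -⟪u + y, w⟫ = -⟪y, w⟫ + -⟪u, w - x⟫ := by
    simp only [inner_add_left, inner_sub_right, real_inner_comm x]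
    ring
  simp only [add_sub_cancel_right, map_mul, conj_e2pi]
  rw [mul_assoc, ← e2pi_add, phase, e2pi_add]
  ring

theorem stftDualInner_eq_integral_fourierInv (η ξ : 𝓢(V, ℂ)) (y x : V) :
    stftDualInner η ξ y x = ∫ w, 𝓕⁻ ξ w * (e2pi (-⟪y, w⟫) * conj (𝓕⁻ η (w - x))) := by
  simp_rw [fourierInv_coe, ← fourier_conj_comp_sub_mul_e2pi, ← fourierInv_coe]
  rw [← Integrable.integral_fourier_mul_eq (𝓕⁻ ξ).integrable
    (integrable_conj_comp_sub_mul_e2pi η y x), ← fourier_coe, fourier_fourierInv_eq, stftDualInner]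
  simp_rw [mul_assoc]

theorem norm_stftDualInner_le (η ξ : V → ℂ) (y x : V) :
    ‖stftDualInner η ξ y x‖ ≤ ∫ s, ‖ξ s‖ * ‖η (s - y)‖ :=
  (norm_integral_le_integral_norm _).trans_eq (by simp [norm_e2pi])

theorem norm_stftDualInner_le_integral_fourierInv (η ξ : 𝓢(V, ℂ)) (y x : V) :
    ‖stftDualInner η ξ y x‖ ≤ ∫ w, ‖𝓕⁻ ξ w‖ * ‖𝓕⁻ η (w - x)‖ := by
  rw [stftDualInner_eq_integral_fourierInv]
  exact (norm_integral_le_integral_norm _).trans_eq (by simp [norm_e2pi])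

/-- `norm_stftDualInner_le` and `norm_stftDualInner_le_integral_fourierInv` decay in `y` and in `x`
respectively, at twice the rate needed; their geometric mean decays in both variables. -/
theorem exists_norm_stftDualInner_le (η ξ : 𝓢(V, ℂ)) :
    ∃ C, 0 ≤ C ∧ ∀ y x, ‖stftDualInner η ξ y x‖ ≤ C *
      (((1 + ‖y‖) ^ (Module.finrank ℝ V + 1))⁻¹ * ((1 + ‖x‖) ^ (Module.finrank ℝ V + 1))⁻¹) := by
  set d := Module.finrank ℝ V + 1
  obtain ⟨C₁, h₁⟩ := exists_integral_norm_mul_norm_comp_sub_le volume ξ η (d * 2)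
  obtain ⟨C₂, h₂⟩ := exists_integral_norm_mul_norm_comp_sub_le volume (𝓕⁻ ξ) (𝓕⁻ η) (d * 2)
  refine ⟨√(C₁ * C₂), Real.sqrt_nonneg _, fun y x => le_sqrt_mul_mul_of_le_mul_sq
    (norm_nonneg _) (by positivity) (by positivity) ?_ ?_⟩
  · rw [inv_pow, ← pow_mul]
    exact (norm_stftDualInner_le η ξ y x).trans (h₁ y)
  · rw [inv_pow, ← pow_mul]
    exact (norm_stftDualInner_le_integral_fourierInv η ξ y x).trans (h₂ x)

theorem exists_norm_stftDualInner_le_const (η ξ : 𝓢(V, ℂ)) :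
    ∃ C, ∀ y x, ‖stftDualInner η ξ y x‖ ≤ C := by
  obtain ⟨C, hC0, hC⟩ := exists_norm_stftDualInner_le η ξ
  refine ⟨C, fun y x => (hC y x).trans (mul_le_of_le_one_right hC0 ?_)⟩
  exact mul_le_one₀ (inv_le_one_of_one_le₀ (one_le_pow₀ (by simp)))
    (by positivity) (inv_le_one_of_one_le₀ (one_le_pow₀ (by simp)))

theorem stronglyMeasurable_stftDualInner (η ξ : 𝓢(V, ℂ)) :
    StronglyMeasurable fun p : V × V => stftDualInner η ξ p.1 p.2 :=
  (Continuous.stronglyMeasurable (by fun_prop) :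
    StronglyMeasurable fun q : (V × V) × V =>
      ξ q.2 * conj (η (q.2 - q.1.1)) * e2pi ⟪q.1.2, q.2 - q.1.1⟫).integral_prod_right'

theorem integrable_stftDualInner (η ξ : 𝓢(V, ℂ)) :
    Integrable fun p : V × V => stftDualInner η ξ p.1 p.2 := by
  obtain ⟨C, -, hC⟩ := exists_norm_stftDualInner_le η ξ
  exact (((integrable_inv_one_add_norm_pow volume).mul_prod
    (integrable_inv_one_add_norm_pow volume)).const_mul C).mono'
    (stronglyMeasurable_stftDualInner η ξ).aestronglyMeasurable (ae_of_all _ fun p => hC p.1 p.2)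

theorem integrable_twisted_stftDualInner (ξ₁ ξ₂ η₁ η₂ : 𝓢(V, ℂ)) (y x : V) :
    Integrable fun p : V × V => stftDualInner η₂ ξ₂ p.1 p.2 *
      stftDualInner η₁ ξ₁ (y - p.1) (x - p.2) * e2pi (-⟪p.2, y - p.1⟫) := by
  obtain ⟨C, hC⟩ := exists_norm_stftDualInner_le_const η₁ ξ₁
  refine ((integrable_stftDualInner η₂ ξ₂).norm.mul_const C).mono' ?_ (ae_of_all _ fun p => ?_)
  · have hV₁ := (stronglyMeasurable_stftDualInner η₁ ξ₁).comp_measurable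
      (measurable_const.sub measurable_id : Measurable fun p : V × V => (y, x) - p)
    exact ((stronglyMeasurable_stftDualInner η₂ ξ₂).aestronglyMeasurable.mul
      hV₁.aestronglyMeasurable).mul (by fun_prop : Continuous _).aestronglyMeasurable
  · rw [norm_mul, norm_mul, norm_e2pi, mul_one]
    exact mul_le_mul_of_nonneg_left (hC _ _) (norm_nonneg _)

theorem integral_twisted_stftDualInner (ξ₁ ξ₂ η₁ η₂ : 𝓢(V, ℂ)) (y x : V) :
    ∫ p : V × V, stftDualInner η₂ ξ₂ p.1 p.2 * stftDualInner η₁ ξ₁ (y - p.1) (x - p.2) *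
        e2pi (-⟪p.2, y - p.1⟫) =
      (∫ t, ξ₁ t * conj (η₂ t)) * stftDualInner η₁ ξ₂ y x := by
  rw [Measure.volume_eq_prod, integral_prod _ (integrable_twisted_stftDualInner ξ₁ ξ₂ η₁ η₂ y x)]
  simp_rw [mul_assoc, integral_stftDualInner_mul_stftDualInner_sub]
  have regroup : ∀ y' t, ξ₂ (t + y') * conj (η₂ t) *
      (ξ₁ t * conj (η₁ (t - (y - y'))) * e2pi ⟪x, t - (y - y')⟫) =
      ξ₁ t * conj (η₂ t) * (ξ₂ (t + y') * conj (η₁ (t + y' - y)) * e2pi ⟪x, t + y' - y⟫) :=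
    fun y' t => by rw [sub_sub_eq_add_sub]; ring
  simp_rw [regroup]
  exact integral_integral_mul_comp_add volume
    ((stftDualWindow η₂ ξ₁ 0).integrable.congr (.of_forall fun t => by simp))
    (integrable_mul_conj_comp_sub_mul_e2pi η₁ ξ₂ y x)

end InnerProductSpace

section Euclidean

def SchwartzMap.toEuclidean (f : 𝓢(Fin n → ℝ, ℂ)) : 𝓢(EuclideanSpace ℝ (Fin n), ℂ) :=
  compCLMOfContinuousLinearEquiv ℝ (EuclideanSpace.equiv (Fin n) ℝ) f

@[simp]
theorem SchwartzMap.toEuclidean_toLp (f : 𝓢(Fin n → ℝ, ℂ)) (s : Fin n → ℝ) :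
    f.toEuclidean (WithLp.toLp 2 s) = f s :=
  rfl

theorem inner_toLp_toLp_eq_dot (x y : Fin n → ℝ) :
    ⟪WithLp.toLp 2 x, WithLp.toLp 2 y⟫ = dot x y := by
  simp [EuclideanSpace.inner_toLp_toLp, dot, dotProduct, mul_comm]

theorem integral_comp_toLp (F : EuclideanSpace ℝ (Fin n) → ℂ) :
    ∫ s, F (WithLp.toLp 2 s) = ∫ u, F u :=
  (PiLp.volume_preserving_toLp (Fin n)).integral_comp
    (MeasurableEquiv.toLp 2 (Fin n → ℝ)).measurableEmbedding F

theorem integral_prod_comp_toLp (F : EuclideanSpace ℝ (Fin n) × EuclideanSpace ℝ (Fin n) → ℂ) :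
    ∫ p : (Fin n → ℝ) × (Fin n → ℝ), F (WithLp.toLp 2 p.1, WithLp.toLp 2 p.2) = ∫ q, F q :=
  ((PiLp.volume_preserving_toLp (Fin n)).prod (PiLp.volume_preserving_toLp (Fin n))).integral_comp
    ((MeasurableEquiv.toLp 2 (Fin n → ℝ)).prodCongr
      (MeasurableEquiv.toLp 2 (Fin n → ℝ))).measurableEmbedding F

theorem ip_eq_integral_toEuclidean (f g : 𝓢(Fin n → ℝ, ℂ)) :
    ip f g = ∫ u, f.toEuclidean u * conj (g.toEuclidean u) := by
  rw [ip, ← integral_comp_toLp]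
  rfl

theorem stftDual_eq_stftDualInner (η ξ : 𝓢(Fin n → ℝ, ℂ)) (p : (Fin n → ℝ) × (Fin n → ℝ)) :
    stftDual η ξ p =
      stftDualInner η.toEuclidean ξ.toEuclidean (WithLp.toLp 2 p.1) (WithLp.toLp 2 p.2) := by
  rw [stftDual, ip, stftDualInner, ← integral_comp_toLp]
  congr 1 with s
  simp [← WithLp.toLp_sub, inner_toLp_toLp_eq_dot, schrodDual, conj_e2pi, mul_comm, mul_left_comm]

theorem twConv_stftDual_eq_integral (ξ₁ ξ₂ η₁ η₂ : 𝓢(Fin n → ℝ, ℂ))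
    (g : (Fin n → ℝ) × (Fin n → ℝ)) :
    twConv (stftDual η₂ ξ₂) (stftDual η₁ ξ₁) g =
      ∫ p : EuclideanSpace ℝ (Fin n) × EuclideanSpace ℝ (Fin n),
        stftDualInner η₂.toEuclidean ξ₂.toEuclidean p.1 p.2 *
          stftDualInner η₁.toEuclidean ξ₁.toEuclidean
            (WithLp.toLp 2 g.1 - p.1) (WithLp.toLp 2 g.2 - p.2) *
          e2pi (-⟪p.2, WithLp.toLp 2 g.1 - p.1⟫) := by
  rw [twConv, ← integral_prod_comp_toLp]
  congr 1 with g'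
  simp only [stftDual_eq_stftDualInner, sigmaG, ← WithLp.toLp_sub, inner_toLp_toLp_eq_dot]
  rfl

end Euclidean

/-- Twisted convolution of dual short-time Fourier transforms: for Schwartz
functions `ξ₁, ξ₂, η₁, η₂`, `(V°_{η₂}ξ₂ ♮ V°_{η₁}ξ₁)(g) = ⟨ξ₁, η₂⟩ · V°_{η₁}ξ₂(g)`. -/
theorem twisted_conv_dual_stft (ξ₁ ξ₂ η₁ η₂ : SchwartzMap (Fin n → ℝ) ℂ)
    (g : (Fin n → ℝ) × (Fin n → ℝ)) :
    twConv (stftDual ⇑η₂ ⇑ξ₂) (stftDual ⇑η₁ ⇑ξ₁) g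
      = ip ⇑ξ₁ ⇑η₂ * stftDual ⇑η₁ ⇑ξ₂ g := by
  rw [twConv_stftDual_eq_integral, integral_twisted_stftDualInner, ip_eq_integral_toEuclidean,
    stftDual_eq_stftDualInner]
end
end
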